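/- If G is a nuciferous graph, then for every vertex v, the nullity of the adjacency matrix of G − v is exactly 1. -/

import Mathlib

open Matrix SimpleGraph

/-- A simple graph is *nuciferous* if its 0-1 adjacency matrix is invertible,
all diagonal entries of the inverse are zero, and all off-diagonal entries of
the inverse are nonzero. -/
def Nuciferous {V : Type*} [Fintype V] [DecidableEq V] (G : SimpleGraph V)
    [DecidableRel G.Adj] : Prop :=
  IsUnit (G.adjMatrix ℝ) ∧ (∀ i, (G.adjMatrix ℝ)⁻¹ i i = 0) ∧
    ∀ i j, i ≠ j → (G.adjMatrix ℝ)⁻¹ i j ≠ 0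

/-!
Let `A` be invertible and `A(v)` the submatrix with row and column `v` deleted. Extending a
kernel vector `x` of `A(v)` by `0` at `v` gives a vector `y` with `A y` supported at `v`, so `y`
is a multiple of the column `A⁻¹ e_v`; hence the kernel of `A(v)` lies in the line spanned by
that column with its `v`-entry removed. When `(A⁻¹)_{vv} = 0` the column already vanishes at `v`,
so the argument runs backwards and puts this vector in the kernel; it is nonzero since `A⁻¹` is
injective.
-/

theorem Fin.insertNth_zero_eq_single {R : Type*} [Zero R] {n : ℕ} (p : Fin (n + 1)) (a : R) :
    Fin.insertNth p a (0 : Fin n → R) = (Pi.single p a : Fin (n + 1) → R) := by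
  ext j
  induction j using Fin.succAboveCases p <;> simp

namespace Matrix

variable {K : Type*} [Field K] {n : ℕ} (A : Matrix (Fin (n + 1)) (Fin (n + 1)) K)
  (v : Fin (n + 1))

theorem removeNth_mulVec_insertNth_zero (x : Fin n → K) :
    Fin.removeNth v (A *ᵥ Fin.insertNth v 0 x) = A.submatrix v.succAbove v.succAbove *ᵥ x := by
  ext i
  simp [Fin.removeNth, mulVec, dotProduct, Fin.sum_univ_succAbove _ v]

variable {A}

theorem ker_mulVecLin_submatrix_succAbove_le_span (hA : IsUnit A.det) :
    LinearMap.ker (A.submatrix v.succAbove v.succAbove).mulVecLin ≤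
      K ∙ Fin.removeNth v (A⁻¹.col v) := by
  intro x hx
  set c := (A *ᵥ Fin.insertNth v 0 x) v
  have hAx : A *ᵥ Fin.insertNth v 0 x = Pi.single v c := by
    rw [← Fin.insertNth_zero_eq_single, ← Fin.insertNth_self_removeNth v (A *ᵥ _),
      removeNth_mulVec_insertNth_zero]
    exact congrArg _ hx
  have hy : Fin.insertNth v 0 x = c • A⁻¹.col v := by
    rw [← mulVec_single_one, ← mulVec_smul, ← Pi.single_smul, smul_eq_mul, mul_one, ← hAx,
      mulVec_mulVec, nonsing_inv_mul _ hA, one_mulVec]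
  have hxc := congrArg (Fin.removeNth v) hy
  rw [Fin.removeNth_insertNth] at hxc
  exact Submodule.mem_span_singleton.mpr ⟨c, hxc.symm⟩

theorem removeNth_col_inv_mem_ker_submatrix (hA : IsUnit A.det) (hv : A⁻¹ v v = 0) :
    Fin.removeNth v (A⁻¹.col v) ∈
      LinearMap.ker (A.submatrix v.succAbove v.succAbove).mulVecLin := by
  have hcol : Fin.insertNth v 0 (Fin.removeNth v (A⁻¹.col v)) = A⁻¹ *ᵥ Pi.single v 1 := by
    rw [mulVec_single_one, ← hv]
    exact Fin.insertNth_self_removeNth v _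
  rw [LinearMap.mem_ker, mulVecLin_apply, ← removeNth_mulVec_insertNth_zero, hcol, mulVec_mulVec,
    mul_nonsing_inv _ hA, one_mulVec, ← Fin.insertNth_zero_eq_single, Fin.removeNth_insertNth]

theorem removeNth_col_inv_ne_zero (hA : IsUnit A.det) (hv : A⁻¹ v v = 0) :
    Fin.removeNth v (A⁻¹.col v) ≠ 0 := by
  have hcol : A⁻¹.col v ≠ 0 := by
    rw [← mulVec_single_one, ← mulVec_zero A⁻¹]
    have hAinv : IsUnit A⁻¹ := isUnit_nonsing_inv_iff.mpr ((isUnit_iff_isUnit_det A).mpr hA)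
    exact (mulVec_injective_iff_isUnit.mpr hAinv).ne (Pi.single_ne_zero_iff.mpr one_ne_zero)
  intro h0
  rw [← Fin.insertNth_self_removeNth v (A⁻¹.col v), h0, col_apply, hv,
    Fin.insertNth_zero_eq_single, Pi.single_zero] at hcol
  exact hcol rfl

theorem ker_mulVecLin_submatrix_succAbove_eq_span (hA : IsUnit A.det) (hv : A⁻¹ v v = 0) :
    LinearMap.ker (A.submatrix v.succAbove v.succAbove).mulVecLin =
      K ∙ Fin.removeNth v (A⁻¹.col v) :=
  (ker_mulVecLin_submatrix_succAbove_le_span v hA).antisymm <|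
    (Submodule.span_singleton_le_iff_mem _ _).mpr (removeNth_col_inv_mem_ker_submatrix v hA hv)

theorem finrank_ker_mulVecLin_submatrix_succAbove (hA : IsUnit A.det) (hv : A⁻¹ v v = 0) :
    Module.finrank K (LinearMap.ker (A.submatrix v.succAbove v.succAbove).mulVecLin) = 1 := by
  rw [ker_mulVecLin_submatrix_succAbove_eq_span v hA hv,
    finrank_span_singleton (removeNth_col_inv_ne_zero v hA hv)]

end Matrix

theorem nuciferous_deleted_vertex_nullity_one {n : ℕ} (G : SimpleGraph (Fin (n + 1)))
    [DecidableRel G.Adj] (h : Nuciferous G) (v : Fin (n + 1)) :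
    Module.finrank ℝ
      (LinearMap.ker (Matrix.mulVecLin
        ((G.adjMatrix ℝ).submatrix v.succAbove v.succAbove))) = 1 := by
  obtain ⟨hunit, hdiag, -⟩ := h
  exact finrank_ker_mulVecLin_submatrix_succAbove v
    ((isUnit_iff_isUnit_det _).mp hunit) (hdiag v)
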